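/- arXiv:1009.0150 — 2 statements merged into one kernel-verified Lean document; each statement's English description precedes it below -/
import Mathlib

section
/- For Schwartz functions f, g on ℝ² and any σ ∈ ℝ, ∬ (f ⋆_σ g)(x,p) dx dp = ∬ (g ⋆_σ f)(x,p) dx dp. -/
/-!
Write `J h (w) = ∫ h(z) e^{(i/ħ)(ξx − ηp)} dz`, so that `Ff(w) = J f(−w) / (2πħ)`.
Since `Ff` is again a Schwartz function, the integrand of `∬ f ⋆_σ g` is integrable on
`ℝ² × ℝ²` (a shear `(w, z) ↦ (w, z − s_σ w)` reduces it to `Ff ⊗ g`), so Fubini and translation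
invariance give `∬ f ⋆_σ g = (2πħ)⁻² ∫ J f(−w) · J g(w) · e^{(i/ħ)(1 − 2σ)ξη} dw`, where
`s_σ(ξ, η) = ((1 − σ)η, σξ)` and the exponent is the kernel's phase at `z = s_σ w`. It is even
in `w`, so the substitution `w ↦ −w` exchanges `f` and `g`.
-/

open MeasureTheory Complex Real

/-- The `hbar`-normalized Fourier transform on the phase space `ℝ²`:
`Ff(ξ,η) = (1/(2πhbar)) ∬ f(x,p) e^{−(i/hbar)(ξx − ηp)} dx dp`. -/
noncomputable def FT (hbar : ℝ) (f : ℝ × ℝ → ℂ) : ℝ × ℝ → ℂ := fun w =>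
  (1 / (2 * π * hbar) : ℂ) *
    ∫ z : ℝ × ℝ, f z * Complex.exp (-(Complex.I / hbar) * (w.1 * z.1 - w.2 * z.2))

/-- The `σ`-star product on the phase space `ℝ²`, in its integral form:
`(f ⋆_σ g)(x,p) = (1/(2πhbar)) ∬ Ff(ξ,η) g(x − (1−σ)η, p − σξ) e^{(i/hbar)(ξx − ηp)} dξ dη`. -/
noncomputable def starProd (hbar σ : ℝ) (f g : ℝ × ℝ → ℂ) : ℝ × ℝ → ℂ := fun z =>
  (1 / (2 * π * hbar) : ℂ) *
    ∫ w : ℝ × ℝ, FT hbar f w * g (z.1 - (1 - σ) * w.2, z.2 - σ * w.1) *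
      Complex.exp ((Complex.I / hbar) * (w.1 * z.1 - w.2 * z.2))

open FourierTransform SchwartzMap

noncomputable def phase (hbar : ℝ) (w z : ℝ × ℝ) : ℂ :=
  Complex.exp ((Complex.I / hbar) * (w.1 * z.1 - w.2 * z.2))

noncomputable def phaseIntegral (hbar : ℝ) (h : ℝ × ℝ → ℂ) (w : ℝ × ℝ) : ℂ :=
  ∫ z : ℝ × ℝ, h z * phase hbar w z

def starShift (σ : ℝ) (w : ℝ × ℝ) : ℝ × ℝ := ((1 - σ) * w.2, σ * w.1)

lemma norm_phase (hbar : ℝ) (w z : ℝ × ℝ) : ‖phase hbar w z‖ = 1 := by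
  rw [phase, Complex.norm_exp, div_eq_mul_inv, ← Complex.ofReal_inv]
  simp

lemma continuous_phase (hbar : ℝ) :
    Continuous fun p : (ℝ × ℝ) × (ℝ × ℝ) => phase hbar p.1 p.2 := by
  unfold phase
  fun_prop

lemma phase_add (hbar : ℝ) (w z s : ℝ × ℝ) :
    phase hbar w (z + s) = phase hbar w z * phase hbar w s := by
  simp only [phase, ← Complex.exp_add, Prod.fst_add, Prod.snd_add]
  push_cast
  ring_nf

lemma phase_neg_starShift (hbar σ : ℝ) (w : ℝ × ℝ) :
    phase hbar (-w) (starShift σ (-w)) = phase hbar w (starShift σ w) := by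
  simp only [phase, starShift, Prod.fst_neg, Prod.snd_neg]
  push_cast
  ring_nf

lemma FT_eq_phaseIntegral_neg (hbar : ℝ) (f : ℝ × ℝ → ℂ) (w : ℝ × ℝ) :
    FT hbar f w = (1 / (2 * π * hbar) : ℂ) * phaseIntegral hbar f (-w) := by
  simp only [FT, phaseIntegral, phase, Prod.fst_neg, Prod.snd_neg]
  push_cast
  ring_nf

lemma integral_comp_sub_mul_phase (hbar : ℝ) (g : ℝ × ℝ → ℂ) (w s : ℝ × ℝ) :
    ∫ z : ℝ × ℝ, g (z - s) * phase hbar w z = phase hbar w s * phaseIntegral hbar g w := by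
  have h : ∀ z, g (z - s) * phase hbar w z =
      g (z - s) * phase hbar w (z - s) * phase hbar w s := fun z => by
    rw [mul_assoc, ← phase_add, sub_add_cancel]
  simp_rw [h]
  rw [integral_mul_const, integral_sub_right_eq_self (fun z => g z * phase hbar w z), mul_comm,
    phaseIntegral]

lemma FT_eq_fourier (hbar : ℝ) (f : ℝ × ℝ → ℂ) (w : ℝ × ℝ) :
    FT hbar f w = (1 / (2 * π * hbar) : ℂ) *
      𝓕 (f ∘ WithLp.ofLp : WithLp 2 (ℝ × ℝ) → ℂ)
        (WithLp.toLp 2 ((2 * π * hbar)⁻¹ * w.1, -((2 * π * hbar)⁻¹ * w.2))) := by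
  rw [FT, Real.fourier_eq',
    ← (WithLp.volume_preserving_symm_measurableEquiv_toLp_prod ℝ ℝ).symm.integral_comp']
  congr 1
  refine integral_congr_ae (Filter.Eventually.of_forall fun z => ?_)
  simp only [MeasurableEquiv.symm_symm, MeasurableEquiv.toLp_apply, WithLp.prod_inner_apply,
    Function.comp_apply, smul_eq_mul, RCLike.inner_apply, conj_trivial]
  rw [mul_comm]
  congr 2
  push_cast
  rw [mul_inv]
  field_simp
  ring

lemma exists_schwartzMap_eq_FT (hbar : ℝ) (f : 𝓢(ℝ × ℝ, ℂ)) :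
    ∃ F : 𝓢(ℝ × ℝ, ℂ), ⇑F = FT hbar f := by
  rcases eq_or_ne hbar 0 with rfl | hbar0
  · -- `FT 0 f = 0`, since `1 / 0 = 0` in `ℂ`.
    exact ⟨0, funext fun w => by simp [FT]⟩
  set a := (2 * π * hbar)⁻¹
  have ha : a ≠ 0 := by simp [a, hbar0, pi_ne_zero]
  let e := WithLp.prodContinuousLinearEquiv 2 ℝ ℝ ℝ
  let D : (ℝ × ℝ) ≃L[ℝ] ℝ × ℝ :=
    (ContinuousLinearEquiv.unitsEquivAut ℝ (Units.mk0 a ha)).prodCongr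
      (ContinuousLinearEquiv.unitsEquivAut ℝ (Units.mk0 (-a) (neg_ne_zero.2 ha)))
  refine ⟨(1 / (2 * π * hbar) : ℂ) • compCLMOfContinuousLinearEquiv ℂ (D.trans e.symm)
    (𝓕 (compCLMOfContinuousLinearEquiv ℂ e f)), funext fun w => ?_⟩
  have hDe : D.trans e.symm w = WithLp.toLp 2 (a * w.1, -(a * w.2)) := by simp [D, e, mul_comm]
  rw [FT_eq_fourier, smul_apply, compCLMOfContinuousLinearEquiv_apply, Function.comp_apply, hDe,
    fourier_coe]
  rfl

lemma integrable_FT (hbar : ℝ) (f : 𝓢(ℝ × ℝ, ℂ)) : Integrable (FT hbar f) := by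
  obtain ⟨F, hF⟩ := exists_schwartzMap_eq_FT hbar f
  exact hF ▸ F.integrable

lemma integrable_starProd_integrand (hbar σ : ℝ) {F g : ℝ × ℝ → ℂ}
    (hF : Integrable F) (hg : Integrable g) :
    Integrable (fun p : (ℝ × ℝ) × (ℝ × ℝ) =>
      F p.1 * g (p.2 - starShift σ p.1) * phase hbar p.1 p.2) (volume.prod volume) := by
  have shear : MeasurePreserving
      (fun p : (ℝ × ℝ) × (ℝ × ℝ) => (p.1, p.2 - starShift σ p.1))
      (volume.prod volume) (volume.prod volume) :=
    (MeasurePreserving.id volume).skew_product (by unfold starShift; fun_prop)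
      (Filter.Eventually.of_forall fun w => (measurePreserving_sub_right volume _).map_eq)
  exact (shear.integrable_comp_of_integrable (hF.mul_prod hg)).mul_bdd
    (continuous_phase hbar).aestronglyMeasurable
    (Filter.Eventually.of_forall fun p => (norm_phase hbar p.1 p.2).le)

lemma integral_starProd (hbar σ : ℝ) {f g : ℝ × ℝ → ℂ}
    (hf : Integrable (FT hbar f)) (hg : Integrable g) :
    ∫ z : ℝ × ℝ, starProd hbar σ f g z =
      (1 / (2 * π * hbar) : ℂ) *
        ∫ w : ℝ × ℝ, FT hbar f w * (phase hbar w (starShift σ w) * phaseIntegral hbar g w) := by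
  have hstar : ∀ z, starProd hbar σ f g z = (1 / (2 * π * hbar) : ℂ) *
      ∫ w : ℝ × ℝ, FT hbar f w * g (z - starShift σ w) * phase hbar w z := fun z => rfl
  simp_rw [hstar]
  rw [integral_const_mul,
    ← integral_integral_swap (integrable_starProd_integrand hbar σ hf hg)]
  simp_rw [mul_assoc, integral_const_mul, integral_comp_sub_mul_phase]

theorem stmt_3_general (hbar σ : ℝ) (f g : SchwartzMap (ℝ × ℝ) ℂ) :
    ∫ z : ℝ × ℝ, starProd hbar σ (⇑f) (⇑g) z = ∫ z : ℝ × ℝ, starProd hbar σ (⇑g) (⇑f) z := by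
  rw [integral_starProd hbar σ (integrable_FT hbar f) g.integrable,
    integral_starProd hbar σ (integrable_FT hbar g) f.integrable, ← integral_neg_eq_self]
  congr 2 with w
  rw [FT_eq_phaseIntegral_neg, FT_eq_phaseIntegral_neg, phase_neg_starShift, neg_neg]
  ring

/-- For Schwartz functions `f, g` on `ℝ²` and any `σ ∈ ℝ`,
`∬ (f ⋆_σ g) dx dp = ∬ (g ⋆_σ f) dx dp`. -/
theorem stmt_3 (hbar σ : ℝ) (hh : 0 < hbar) (f g : SchwartzMap (ℝ × ℝ) ℂ) :
    ∫ z : ℝ × ℝ, starProd hbar σ (⇑f) (⇑g) z = ∫ z : ℝ × ℝ, starProd hbar σ (⇑g) (⇑f) z :=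
  stmt_3_general hbar σ f g
end

section
/- For σ,σ' ∈ ℝ, the operator S_{σ'−σ} = exp(iħ(σ'−σ) ∂_x ∂_p) intertwines the σ-star product with the σ'-star product on polynomial (or formal power series) functions in (x,p): S_{σ'−σ}(f ⋆_σ g) = (S_{σ'−σ} f) ⋆_{σ'} (S_{σ'−σ} g), where f ⋆_σ g = Σ_{n,m≥0} (−1)^m (iħ)^{n+m} (σ^n (1−σ)^m / (n! m!)) (∂_x^n ∂_p^m f)(∂_x^m ∂_p^n g). -/
/-!
With `D₁ = ∂ₓ ⊗ 1`, `D₂ = 1 ⊗ ∂ₓ`, `E₁ = ∂ₚ ⊗ 1`, `E₂ = 1 ⊗ ∂ₚ` acting on `f ⊗ g` and `μ` the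
multiplication, `⋆_σ = μ ∘ exp (u D₁E₂ + v E₁D₂)` with `u = iħσ`, `v = -iħ(1 - σ)`, while
`S_t ∘ μ = μ ∘ exp (t (D₁ + D₂)(E₁ + E₂))`. All these operators commute, so
`S_t ∘ ⋆_σ = μ ∘ exp ((u + t) D₁E₂ + (v + t) E₁D₂) ∘ (S_t ⊗ S_t)`, and `u + t`, `v + t` are the
parameters of `⋆_{σ'}` when `t = iħ(σ' - σ)`.

Rather than manipulating exponentials of operators, the identity is proved by induction on `f`:
the polynomials `f` for which it holds for every `g` form a submodule containing `1`, and it is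
closed under multiplication by `x` because `S_t` and `⋆` satisfy matching commutation rules
`S_t (x f) = x S_t f + t S_t (∂ₚ f)` and `(x f) ⋆ g = x (f ⋆ g) + u f ⋆ ∂ₚ g`; the case of `p`
follows by exchanging the roles of the two variables.
-/

open scoped Nat

/-- Iterated partial derivative `∂_x^n ∂_p^m` on polynomials in the two variables
`x` (index `0`) and `p` (index `1`). -/
noncomputable def dxdp (n m : ℕ) (f : MvPolynomial (Fin 2) ℂ) : MvPolynomial (Fin 2) ℂ :=
  (fun h => MvPolynomial.pderiv (0 : Fin 2) h)^[n]
    ((fun h => MvPolynomial.pderiv (1 : Fin 2) h)^[m] f)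

/-- The `σ`-star product on polynomials:
`f ⋆_σ g = Σ_{n,m} (−1)^m (iħ)^{n+m} σ^n (1−σ)^m /(n!m!) (∂_x^n ∂_p^m f)(∂_x^m ∂_p^n g)`
(a finite sum on polynomials, expressed as a `finsum`). -/
noncomputable def polyStar (hbar σ : ℝ) (f g : MvPolynomial (Fin 2) ℂ) :
    MvPolynomial (Fin 2) ℂ :=
  ∑ᶠ nm : ℕ × ℕ,
    ((-1 : ℂ) ^ nm.2 * (Complex.I * (hbar : ℂ)) ^ (nm.1 + nm.2) * (σ : ℂ) ^ nm.1 *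
        ((1 : ℂ) - (σ : ℂ)) ^ nm.2 / ((nm.1)! * (nm.2)!)) •
      (dxdp nm.1 nm.2 f * dxdp nm.2 nm.1 g)

/-- The intertwining operator `S_c = exp(iħ c ∂_x∂_p)` on polynomials. -/
noncomputable def Sop (hbar c : ℝ) (f : MvPolynomial (Fin 2) ℂ) : MvPolynomial (Fin 2) ℂ :=
  ∑ᶠ k : ℕ, ((Complex.I * (hbar : ℂ) * (c : ℂ)) ^ k / (k)!) • dxdp k k f

namespace MvPolynomial

open Finset

section CommSemiring

variable {R σ : Type*} [CommSemiring R] {i k : σ} {f : MvPolynomial σ R}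

theorem totalDegree_pderiv_lt (h : pderiv i f ≠ 0) :
    (pderiv i f).totalDegree < f.totalDegree := by
  have key : ∀ s ∈ (pderiv i f).support, s.degree < f.totalDegree := by
    intro s hs
    rw [mem_support_iff, coeff_pderiv] at hs
    have := le_totalDegree (mem_support_iff.2 (left_ne_zero_of_mul hs))
    change (s + Finsupp.single i 1).degree ≤ _ at this
    rw [map_add, Finsupp.degree_single] at this
    omega
  obtain ⟨s, hs⟩ := support_nonempty.2 h
  exact (Finset.sup_lt_iff (Nat.bot_eq_zero ▸ (Nat.zero_le _).trans_lt (key s hs))).2 key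

theorem totalDegree_pderiv_le : (pderiv i f).totalDegree ≤ f.totalDegree := by
  by_cases h : pderiv i f = 0
  · simp [h]
  · exact (totalDegree_pderiv_lt h).le

theorem pderiv_pow_apply_eq_zero {n : ℕ} (h : f.totalDegree < n) :
    ((pderiv i).toLinearMap ^ n) f = 0 := by
  induction n generalizing f with
  | zero => omega
  | succ n ih =>
    rw [pow_succ, Module.End.mul_apply, Derivation.coeFn_coe]
    by_cases hf : pderiv i f = 0
    · simp [hf]
    · exact ih ((totalDegree_pderiv_lt hf).trans_le (Nat.lt_succ_iff.1 h))

-- At `n = 0` the coefficient `n` kills the term with the truncated exponent `n - 1`.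
theorem pderiv_pow_X_mul_self (n : ℕ) (f : MvPolynomial σ R) :
    ((pderiv i).toLinearMap ^ n) (X i * f) =
      X i * ((pderiv i).toLinearMap ^ n) f + (n : R) • ((pderiv i).toLinearMap ^ (n - 1)) f := by
  have pderiv_pow_apply (m : ℕ) (g : MvPolynomial σ R) :
      pderiv i (((pderiv i).toLinearMap ^ m) g) = ((pderiv i).toLinearMap ^ (m + 1)) g := by
    rw [pow_succ', Module.End.mul_apply, Derivation.coeFn_coe]
  induction n with
  | zero => simp
  | succ n ih =>
    rw [← pderiv_pow_apply, ih]
    rcases n with _ | n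
    · simp
    · simp only [map_add, Derivation.map_smul, pderiv_mul, pderiv_X_self, one_mul,
        Nat.add_sub_cancel, pderiv_pow_apply]
      push_cast
      module

theorem pderiv_pow_X_mul_of_ne (h : k ≠ i) (n : ℕ) (f : MvPolynomial σ R) :
    ((pderiv i).toLinearMap ^ n) (X k * f) = X k * ((pderiv i).toLinearMap ^ n) f := by
  induction n with
  | zero => simp
  | succ n ih =>
    rw [pow_succ', Module.End.mul_apply, ih]
    simp [pderiv_X_of_ne h]

end CommSemiring

section CommRing

variable {R σ : Type*} [CommRing R] {i j k : σ}

theorem pderiv_comm (i j : σ) (f : MvPolynomial σ R) :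
    pderiv i (pderiv j f) = pderiv j (pderiv i f) := by
  have : ⁅pderiv (R := R) i, pderiv (R := R) j⁆ = 0 := by
    refine derivation_ext fun k => ?_
    classical
    simp [Derivation.commutator_apply, pderiv_X, Pi.single_apply, apply_ite]
  simpa [Derivation.commutator_apply, sub_eq_zero] using congr($this f)

theorem commute_pderiv (i j : σ) :
    Commute (pderiv (R := R) (σ := σ) i).toLinearMap (pderiv j).toLinearMap :=
  LinearMap.ext (pderiv_comm i j)

variable (i j) in
noncomputable def mixedPderiv (n m : ℕ) : Module.End R (MvPolynomial σ R) :=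
  (pderiv i).toLinearMap ^ n * (pderiv j).toLinearMap ^ m

theorem mixedPderiv_succ_right (n m : ℕ) (f : MvPolynomial σ R) :
    mixedPderiv i j n (m + 1) f = mixedPderiv i j n m (pderiv j f) := by
  simp [mixedPderiv, pow_succ]

theorem mixedPderiv_comm (n m : ℕ) : mixedPderiv (R := R) i j n m = mixedPderiv j i m n :=
  ((commute_pderiv i j).pow_pow n m).eq

theorem pderiv_mixedPderiv (n m : ℕ) (f : MvPolynomial σ R) :
    pderiv k (mixedPderiv i j n m f) = mixedPderiv i j n m (pderiv k f) :=
  LinearMap.congr_fun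
    (((commute_pderiv k i).pow_right n).mul_right ((commute_pderiv k j).pow_right m)).eq f

theorem mixedPderiv_apply_eq_zero {n m : ℕ} {f : MvPolynomial σ R}
    (h : f.totalDegree < n + m) : mixedPderiv i j n m f = 0 := by
  induction m generalizing f with
  | zero => simpa [mixedPderiv] using pderiv_pow_apply_eq_zero h
  | succ m ih =>
    rw [mixedPderiv_succ_right]
    by_cases hf : pderiv j f = 0
    · simp [hf]
    · exact ih (by have := totalDegree_pderiv_lt hf; omega)

theorem mixedPderiv_X_mul_self (hij : i ≠ j) (n m : ℕ) (f : MvPolynomial σ R) :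
    mixedPderiv i j n m (X i * f) =
      X i * mixedPderiv i j n m f + (n : R) • mixedPderiv i j (n - 1) m f := by
  simp only [mixedPderiv, Module.End.mul_apply, pderiv_pow_X_mul_of_ne hij,
    pderiv_pow_X_mul_self]

theorem mixedPderiv_X_mul_of_ne (hi : k ≠ i) (hj : k ≠ j) (n m : ℕ) (f : MvPolynomial σ R) :
    mixedPderiv i j n m (X k * f) = X k * mixedPderiv i j n m f := by
  simp only [mixedPderiv, Module.End.mul_apply, pderiv_pow_X_mul_of_ne hi,
    pderiv_pow_X_mul_of_ne hj]

end CommRing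

variable {K σ : Type*} [Field K] {i j k : σ}

variable (i j) in
noncomputable def mixedExp (t : K) (f : MvPolynomial σ K) : MvPolynomial σ K :=
  ∑ᶠ k : ℕ, (t ^ k / k !) • mixedPderiv i j k k f

variable (i j) in
noncomputable def bidiffExp (u v : K) (f g : MvPolynomial σ K) : MvPolynomial σ K :=
  ∑ᶠ nm : ℕ × ℕ, (u ^ nm.1 / nm.1 ! * (v ^ nm.2 / nm.2 !)) •
    (mixedPderiv i j nm.1 nm.2 f * mixedPderiv i j nm.2 nm.1 g)

theorem mixedExp_eq_sum {N : ℕ} {f : MvPolynomial σ K} (hN : f.totalDegree < N) (t : K) :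
    mixedExp i j t f = ∑ k ∈ range N, (t ^ k / k !) • mixedPderiv i j k k f := by
  refine finsum_eq_sum_of_support_subset _ fun k hk => ?_
  by_contra hkN
  simp only [coe_range, Set.mem_Iio, not_lt] at hkN
  exact hk (by dsimp only; rw [mixedPderiv_apply_eq_zero (by omega), smul_zero])

theorem bidiffExp_eq_sum {N M : ℕ} {f : MvPolynomial σ K} (hN : f.totalDegree < N)
    (hM : f.totalDegree < M) (u v : K) (g : MvPolynomial σ K) :
    bidiffExp i j u v f g = ∑ n ∈ range N, ∑ m ∈ range M,
      (u ^ n / n ! * (v ^ m / m !)) • (mixedPderiv i j n m f * mixedPderiv i j m n g) := by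
  rw [← sum_product']
  refine finsum_eq_sum_of_support_subset _ fun nm hnm => ?_
  by_contra hnmNM
  simp only [coe_product, coe_range, Set.mem_prod, Set.mem_Iio, not_and_or, not_lt] at hnmNM
  exact hnm (by dsimp only; rw [mixedPderiv_apply_eq_zero (by omega), zero_mul, smul_zero])

theorem mixedExp_add (t : K) (f g : MvPolynomial σ K) :
    mixedExp i j t (f + g) = mixedExp i j t f + mixedExp i j t g := by
  have hf : f.totalDegree < max f.totalDegree g.totalDegree + 1 := by omega
  have hg : g.totalDegree < max f.totalDegree g.totalDegree + 1 := by omega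
  have hfg := (totalDegree_add f g).trans_lt (max_lt hf hg)
  rw [mixedExp_eq_sum hf, mixedExp_eq_sum hg, mixedExp_eq_sum hfg, ← sum_add_distrib]
  simp only [map_add, smul_add]

theorem mixedExp_smul (t a : K) (f : MvPolynomial σ K) :
    mixedExp i j t (a • f) = a • mixedExp i j t f := by
  have hf := Nat.lt_succ_self f.totalDegree
  rw [mixedExp_eq_sum hf, mixedExp_eq_sum ((totalDegree_smul_le a f).trans_lt hf), smul_sum]
  simp only [map_smul, smul_comm a]

theorem bidiffExp_add_left (u v : K) (f₁ f₂ g : MvPolynomial σ K) :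
    bidiffExp i j u v (f₁ + f₂) g = bidiffExp i j u v f₁ g + bidiffExp i j u v f₂ g := by
  have h₁ : f₁.totalDegree < max f₁.totalDegree f₂.totalDegree + 1 := by omega
  have h₂ : f₂.totalDegree < max f₁.totalDegree f₂.totalDegree + 1 := by omega
  have h := (totalDegree_add f₁ f₂).trans_lt (max_lt h₁ h₂)
  rw [bidiffExp_eq_sum h₁ h₁, bidiffExp_eq_sum h₂ h₂, bidiffExp_eq_sum h h, ← sum_add_distrib]
  simp only [← sum_add_distrib, map_add, add_mul, smul_add]

theorem bidiffExp_smul_left (u v a : K) (f g : MvPolynomial σ K) :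
    bidiffExp i j u v (a • f) g = a • bidiffExp i j u v f g := by
  have hf := Nat.lt_succ_self f.totalDegree
  have h := (totalDegree_smul_le a f).trans_lt hf
  rw [bidiffExp_eq_sum hf hf, bidiffExp_eq_sum h h, smul_sum]
  simp only [smul_sum, map_smul, smul_mul_assoc, smul_comm a]

theorem mixedExp_zero (t : K) : mixedExp i j t 0 = 0 := by
  simp [mixedExp]

theorem bidiffExp_zero_left (u v : K) (g : MvPolynomial σ K) : bidiffExp i j u v 0 g = 0 := by
  simp [bidiffExp]

theorem mixedExp_one (t : K) : mixedExp i j t 1 = 1 := by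
  rw [mixedExp_eq_sum (N := 1) (by simp)]
  simp [mixedPderiv]

theorem bidiffExp_one_left (u v : K) (g : MvPolynomial σ K) : bidiffExp i j u v 1 g = g := by
  rw [bidiffExp_eq_sum (N := 1) (M := 1) (by simp) (by simp)]
  simp [mixedPderiv]

theorem mixedExp_comm (t : K) (f : MvPolynomial σ K) : mixedExp i j t f = mixedExp j i t f := by
  simp only [mixedExp, mixedPderiv_comm (i := i)]

theorem bidiffExp_comm (u v : K) (f g : MvPolynomial σ K) :
    bidiffExp i j u v f g = bidiffExp j i v u f g := by
  rw [bidiffExp, bidiffExp, ← finsum_comp_equiv (Equiv.prodComm ℕ ℕ)]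
  simp only [Equiv.prodComm_apply, Prod.fst_swap, Prod.snd_swap, mixedPderiv_comm (i := i),
    mul_comm (u ^ _ / _)]

theorem pderiv_mixedExp (t : K) (f : MvPolynomial σ K) :
    pderiv k (mixedExp i j t f) = mixedExp i j t (pderiv k f) := by
  have hf := Nat.lt_succ_self f.totalDegree
  rw [mixedExp_eq_sum hf, mixedExp_eq_sum (totalDegree_pderiv_le.trans_lt hf), map_sum]
  simp only [Derivation.map_smul, pderiv_mixedPderiv]

theorem pderiv_bidiffExp (u v : K) (f g : MvPolynomial σ K) :
    pderiv k (bidiffExp i j u v f g) =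
      bidiffExp i j u v (pderiv k f) g + bidiffExp i j u v f (pderiv k g) := by
  have hf := Nat.lt_succ_self f.totalDegree
  have hf' := totalDegree_pderiv_le (i := k).trans_lt hf
  rw [bidiffExp_eq_sum hf hf, bidiffExp_eq_sum hf' hf', bidiffExp_eq_sum hf hf, map_sum,
    ← sum_add_distrib]
  simp only [map_sum, ← sum_add_distrib, Derivation.map_smul, pderiv_mul, pderiv_mixedPderiv,
    smul_add]

theorem mixedExp_X_mul_of_ne (hi : k ≠ i) (hj : k ≠ j) (t : K) (f : MvPolynomial σ K) :
    mixedExp i j t (X k * f) = X k * mixedExp i j t f := by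
  have hf : f.totalDegree < f.totalDegree + 2 := by omega
  have hXf : (X k * f).totalDegree < f.totalDegree + 2 :=
    (totalDegree_mul _ _).trans_lt (by rw [totalDegree_X]; omega)
  rw [mixedExp_eq_sum hXf, mixedExp_eq_sum hf, mul_sum]
  simp only [mixedPderiv_X_mul_of_ne hi hj, mul_smul_comm]

theorem bidiffExp_X_mul_of_ne (hi : k ≠ i) (hj : k ≠ j) (u v : K) (f g : MvPolynomial σ K) :
    bidiffExp i j u v (X k * f) g = X k * bidiffExp i j u v f g := by
  have hf : f.totalDegree < f.totalDegree + 2 := by omega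
  have hXf : (X k * f).totalDegree < f.totalDegree + 2 :=
    (totalDegree_mul _ _).trans_lt (by rw [totalDegree_X]; omega)
  rw [bidiffExp_eq_sum hXf hXf, bidiffExp_eq_sum hf hf, mul_sum]
  simp only [mixedPderiv_X_mul_of_ne hi hj, mul_sum, mul_smul_comm, mul_assoc]

section CharZero

variable [CharZero K]

theorem pow_succ_div_factorial_succ_mul (t : K) (n : ℕ) :
    t ^ (n + 1) / (n + 1)! * (n + 1 : ℕ) = t * (t ^ n / n !) := by
  rw [Nat.factorial_succ]
  push_cast
  field_simp
  ring

theorem mixedExp_X_mul_self (hij : i ≠ j) (t : K) (f : MvPolynomial σ K) :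
    mixedExp i j t (X i * f) = X i * mixedExp i j t f + t • mixedExp i j t (pderiv j f) := by
  set N := f.totalDegree + 1
  have hf : f.totalDegree < N + 1 := by omega
  have hXf : (X i * f).totalDegree < N + 1 :=
    (totalDegree_mul _ _).trans_lt (by rw [totalDegree_X]; omega)
  have hDf : (pderiv j f).totalDegree < N := totalDegree_pderiv_le.trans_lt (by omega)
  rw [mixedExp_eq_sum hXf, mixedExp_eq_sum hf, mixedExp_eq_sum hDf, mul_sum, smul_sum]
  simp only [mixedPderiv_X_mul_self hij, smul_add, mul_smul_comm, sum_add_distrib, smul_smul]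
  congr 1
  rw [sum_range_succ']
  simp only [Nat.cast_zero, mul_zero, zero_smul, add_zero, Nat.add_sub_cancel,
    ← mixedPderiv_succ_right, pow_succ_div_factorial_succ_mul]

theorem bidiffExp_X_mul_self (hij : i ≠ j) (u v : K) (f g : MvPolynomial σ K) :
    bidiffExp i j u v (X i * f) g =
      X i * bidiffExp i j u v f g + u • bidiffExp i j u v f (pderiv j g) := by
  set N := f.totalDegree + 1
  have hf : f.totalDegree < N + 1 := by omega
  have hf' : f.totalDegree < N := by omega
  have hXf : (X i * f).totalDegree < N + 1 :=
    (totalDegree_mul _ _).trans_lt (by rw [totalDegree_X]; omega)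
  rw [bidiffExp_eq_sum hXf hXf, bidiffExp_eq_sum hf hf, bidiffExp_eq_sum hf' hf, mul_sum, smul_sum]
  simp only [mixedPderiv_X_mul_self hij, add_mul, smul_add, mul_sum, smul_sum, mul_smul_comm,
    smul_mul_assoc, sum_add_distrib, smul_smul, mul_assoc]
  congr 1
  rw [sum_range_succ']
  simp only [Nat.cast_zero, mul_zero, zero_smul, sum_const_zero, add_zero, Nat.add_sub_cancel,
    ← mixedPderiv_succ_right]
  refine sum_congr rfl fun n _ => sum_congr rfl fun m _ => congr($(?_) • _)
  linear_combination (v ^ m / m !) * pow_succ_div_factorial_succ_mul u n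

end CharZero

variable (i j) in
def intertwiningSubmodule (u v t : K) : Submodule K (MvPolynomial σ K) where
  carrier := {f | ∀ g, mixedExp i j t (bidiffExp i j u v f g) =
    bidiffExp i j (u + t) (v + t) (mixedExp i j t f) (mixedExp i j t g)}
  add_mem' {f₁ f₂} h₁ h₂ g := by
    rw [bidiffExp_add_left, mixedExp_add, h₁ g, h₂ g, mixedExp_add, bidiffExp_add_left]
  zero_mem' g := by
    rw [bidiffExp_zero_left, mixedExp_zero, bidiffExp_zero_left]
  smul_mem' a f h g := by
    rw [bidiffExp_smul_left, mixedExp_smul, h g, mixedExp_smul, bidiffExp_smul_left]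

variable {u v t : K} {f : MvPolynomial σ K}

theorem intertwiningSubmodule_comm :
    intertwiningSubmodule i j u v t = intertwiningSubmodule j i v u t := by
  ext f
  change (∀ g, _) ↔ (∀ g, _)
  simp only [mixedExp_comm (i := i) (j := j), bidiffExp_comm (i := i) (j := j)]

theorem one_mem_intertwiningSubmodule : 1 ∈ intertwiningSubmodule i j u v t := fun g => by
  rw [bidiffExp_one_left, mixedExp_one, bidiffExp_one_left]

theorem X_mul_mem_intertwiningSubmodule_of_ne (hi : k ≠ i) (hj : k ≠ j)
    (hf : f ∈ intertwiningSubmodule i j u v t) : X k * f ∈ intertwiningSubmodule i j u v t :=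
  fun g => by
    rw [bidiffExp_X_mul_of_ne hi hj, mixedExp_X_mul_of_ne hi hj, hf g,
      mixedExp_X_mul_of_ne hi hj, bidiffExp_X_mul_of_ne hi hj]

variable [CharZero K]

theorem X_mul_mem_intertwiningSubmodule (hij : i ≠ j) (hf : f ∈ intertwiningSubmodule i j u v t) :
    X i * f ∈ intertwiningSubmodule i j u v t := fun g => by
  rw [bidiffExp_X_mul_self hij, mixedExp_add, mixedExp_smul, mixedExp_X_mul_self hij,
    ← pderiv_mixedExp, hf g, hf (pderiv j g), pderiv_bidiffExp, mixedExp_X_mul_self hij,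
    bidiffExp_add_left, bidiffExp_smul_left, bidiffExp_X_mul_self hij, pderiv_mixedExp,
    pderiv_mixedExp]
  module

theorem mem_intertwiningSubmodule (hij : i ≠ j) (f : MvPolynomial σ K) :
    f ∈ intertwiningSubmodule i j u v t := by
  induction f using MvPolynomial.induction_on with
  | C a => simpa [C_eq_smul_one] using Submodule.smul_mem _ a one_mem_intertwiningSubmodule
  | add p q hp hq => exact add_mem hp hq
  | mul_X p k hp =>
    rw [mul_comm]
    by_cases hi : k = i
    · subst hi
      exact X_mul_mem_intertwiningSubmodule hij hp
    by_cases hj : k = j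
    · subst hj
      rw [intertwiningSubmodule_comm] at hp ⊢
      exact X_mul_mem_intertwiningSubmodule (Ne.symm hij) hp
    exact X_mul_mem_intertwiningSubmodule_of_ne hi hj hp

theorem mixedExp_bidiffExp (hij : i ≠ j) (u v t : K) (f g : MvPolynomial σ K) :
    mixedExp i j t (bidiffExp i j u v f g) =
      bidiffExp i j (u + t) (v + t) (mixedExp i j t f) (mixedExp i j t g) :=
  mem_intertwiningSubmodule hij f g

end MvPolynomial

open MvPolynomial

theorem dxdp_eq_mixedPderiv (n m : ℕ) (f : MvPolynomial (Fin 2) ℂ) :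
    dxdp n m f = mixedPderiv 0 1 n m f := by
  simp [dxdp, mixedPderiv, Module.End.pow_apply]

theorem Sop_eq_mixedExp (hbar c : ℝ) (f : MvPolynomial (Fin 2) ℂ) :
    Sop hbar c f = mixedExp 0 1 (Complex.I * hbar * c) f := by
  simp only [Sop, mixedExp, dxdp_eq_mixedPderiv]

theorem polyStar_eq_bidiffExp (hbar σ : ℝ) (f g : MvPolynomial (Fin 2) ℂ) :
    polyStar hbar σ f g =
      bidiffExp 0 1 (Complex.I * hbar * σ) (-(Complex.I * hbar * (1 - σ))) f g := by
  rw [show -(Complex.I * hbar * (1 - σ)) = -1 * (Complex.I * hbar) * (1 - σ) by ring]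
  simp only [polyStar, bidiffExp, dxdp_eq_mixedPderiv, mul_pow, pow_add]
  congr! 3
  ring

/-- `S_{σ'−σ}` intertwines the `σ`-star product with the `σ'`-star product:
`S_{σ'−σ}(f ⋆_σ g) = (S_{σ'−σ} f) ⋆_{σ'} (S_{σ'−σ} g)`. -/
theorem stmt_19 (hbar σ σ' : ℝ) (f g : MvPolynomial (Fin 2) ℂ) :
    Sop hbar (σ' - σ) (polyStar hbar σ f g) =
      polyStar hbar σ' (Sop hbar (σ' - σ) f) (Sop hbar (σ' - σ) g) := by
  simp only [Sop_eq_mixedExp, polyStar_eq_bidiffExp]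
  convert mixedExp_bidiffExp (by decide : (0 : Fin 2) ≠ 1) _ _ _ f g using 2 <;> push_cast <;> ring
end
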